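/- arXiv:2107.03268 — 3 statements merged into one kernel-verified Lean document; each statement's English description precedes it below -/
import Mathlib

section
/- Let β > 0 be a real number, let k be a nonzero integer, and let t, η be real numbers. Then (k² + (η − kt)²)^{−β} ≤ 2^β (1 + t²)^{−β} (1 + k² + η²)^{β}. -/
/-! Since `|k| ≥ 1`, `|t| ≤ |k t| ≤ |η - k t| + |η|`, whence
`1 + t² ≤ 2 (k² + (η - k t)²) (1 + k² + η²)`; raising this to the power `β` and inverting gives
the bound. -/

lemma one_add_sq_le_two_mul_symbol_mul {k : ℝ} (hk : 1 ≤ k ^ 2) (t η : ℝ) :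
    1 + t ^ 2 ≤ 2 * (k ^ 2 + (η - k * t) ^ 2) * (1 + k ^ 2 + η ^ 2) := by
  have hkt : k ^ 2 * t ^ 2 ≤ 2 * ((η - k * t) ^ 2 + η ^ 2) := by
    nlinarith [sq_nonneg (η - k * t + η)]
  calc 1 + t ^ 2 ≤ 1 + k ^ 2 * t ^ 2 := by nlinarith [sq_nonneg t]
    _ ≤ 2 * (1 + η ^ 2) + 2 * (η - k * t) ^ 2 := by linarith
    _ ≤ 2 * (k ^ 2 + (η - k * t) ^ 2) * (1 + k ^ 2 + η ^ 2) := by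
      nlinarith [sq_nonneg η, sq_nonneg k, mul_nonneg (sq_nonneg (η - k * t)) (sq_nonneg η),
        mul_nonneg (sq_nonneg (η - k * t)) (sq_nonneg k)]

lemma rpow_neg_le_mul_of_le_mul {x y c q β : ℝ} (hx : 0 < x) (hy : 0 < y) (hc : 0 ≤ c)
    (hq : 0 ≤ q) (hβ : 0 ≤ β) (h : y ≤ c * x * q) :
    x ^ (-β) ≤ c ^ β * y ^ (-β) * q ^ β := by
  have hyβ : y ^ β ≤ c ^ β * x ^ β * q ^ β := by
    rw [← Real.mul_rpow hc hx.le, ← Real.mul_rpow (by positivity) hq]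
    exact Real.rpow_le_rpow hy.le h hβ
  rw [Real.rpow_neg hx.le, Real.rpow_neg hy.le, inv_le_iff_one_le_mul₀ (by positivity)]
  calc (1 : ℝ) = y ^ β * (y ^ β)⁻¹ := (mul_inv_cancel₀ (by positivity)).symm
    _ ≤ c ^ β * x ^ β * q ^ β * (y ^ β)⁻¹ := by gcongr
    _ = c ^ β * (y ^ β)⁻¹ * q ^ β * x ^ β := by ring

/-- For `β > 0`, nonzero integer `k`, and reals `t, η`,
`(k² + (η − kt)²)^{−β} ≤ 2^β (1 + t²)^{−β} (1 + k² + η²)^{β}`. -/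
theorem couette_symbol_neg_rpow_bound (β : ℝ) (hβ : 0 < β) (k : ℤ) (hk : k ≠ 0)
    (t η : ℝ) :
    ((k : ℝ) ^ 2 + (η - k * t) ^ 2) ^ (-β) ≤
      (2 : ℝ) ^ β * (1 + t ^ 2) ^ (-β) * (1 + (k : ℝ) ^ 2 + η ^ 2) ^ β := by
  have hk_sq : (1 : ℝ) ≤ (k : ℝ) ^ 2 := by
    have : (1 : ℤ) ≤ k ^ 2 := (one_le_sq_iff_one_le_abs k).mpr (Int.one_le_abs hk)
    exact_mod_cast this
  exact rpow_neg_le_mul_of_le_mul (by positivity) (by positivity) zero_le_two (by positivity)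
    hβ.le (one_add_sq_le_two_mul_symbol_mul hk_sq t η)
end

section
/- Let s ∈ ℝ, β > 0, t ∈ ℝ, and let f̂ : ℤ × ℝ → ℂ be a function such that η ↦ f̂(k,η) is measurable for each k and f̂(0,η) = 0 for all η. Then ∑_{k∈ℤ} ∫_ℝ (1+k²+η²)^{s} (k²+(η−kt)²)^{−2β} |f̂(k,η)|² dη ≤ 4^β (1+t²)^{−2β} ∑_{k∈ℤ} ∫_ℝ (1+k²+η²)^{s+2β} |f̂(k,η)|² dη, and moreover (without the vanishing assumption on the zero mode) ∑_{k∈ℤ} ∫_ℝ (1+k²+η²)^{s} (k²+(η−kt)²)^{2β} |f̂(k,η)|² dη ≤ 4^β (1+t²)^{2β} ∑_{k∈ℤ} ∫_ℝ (1+k²+η²)^{s+2β} |f̂(k,η)|² dη. -/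
/-!
Both bounds are pointwise in `(k, η)`. With `p = k² + (η - k t)²` and `⟨k,η⟩² = 1 + k² + η²`,
one has `p ≤ 2 (1 + t²) ⟨k,η⟩²` always, and `1 + t² ≤ 2 p ⟨k,η⟩²` when `k ≠ 0` (then `t² ≤ k² t²`
is controlled by `(η - k t)²` and `η²`). Raising these to the power `2β` gives the multiplier bounds
with constant `2 ^ (2β) = 4 ^ β`, which survive integration in `η` and summation in `k`.
-/

open MeasureTheory Real

theorem tsum_lintegral_ofReal_le_mul {ι α : Type*} [MeasurableSpace α] {μ : Measure α}
    {F G : ι → α → ℝ} {C : ℝ} (hC : 0 ≤ C) (h : ∀ i x, F i x ≤ C * G i x) :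
    ∑' i, ∫⁻ x, ENNReal.ofReal (F i x) ∂μ ≤
      ENNReal.ofReal C * ∑' i, ∫⁻ x, ENNReal.ofReal (G i x) ∂μ := by
  calc ∑' i, ∫⁻ x, ENNReal.ofReal (F i x) ∂μ
      ≤ ∑' i, ∫⁻ x, ENNReal.ofReal (C * G i x) ∂μ :=
        ENNReal.tsum_le_tsum fun i => lintegral_mono fun x => ENNReal.ofReal_le_ofReal (h i x)
    _ = ENNReal.ofReal C * ∑' i, ∫⁻ x, ENNReal.ofReal (G i x) ∂μ := by
        simp_rw [ENNReal.ofReal_mul hC, lintegral_const_mul' _ _ ENNReal.ofReal_ne_top,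
          ENNReal.tsum_mul_left]

theorem rpow_mul_mul_le_mul_rpow_add_mul {A w C s γ n : ℝ} (hA : 0 < A) (hn : 0 ≤ n)
    (h : w ≤ C * A ^ γ) : A ^ s * w * n ≤ C * (A ^ (s + γ) * n) := by
  calc A ^ s * w * n ≤ A ^ s * (C * A ^ γ) * n := by gcongr
    _ = C * (A ^ (s + γ) * n) := by rw [rpow_add hA]; ring

theorem two_rpow_two_mul (β : ℝ) : (2 : ℝ) ^ (2 * β) = 4 ^ β := by
  rw [rpow_mul zero_le_two]; norm_num

theorem rpow_le_two_rpow_mul_of_le_two_mul {x y z γ : ℝ} (hx : 0 ≤ x) (hy : 0 ≤ y) (hz : 0 ≤ z)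
    (hγ : 0 ≤ γ) (h : x ≤ 2 * (y * z)) : x ^ γ ≤ 2 ^ γ * y ^ γ * z ^ γ := by
  calc x ^ γ ≤ (2 * (y * z)) ^ γ := rpow_le_rpow hx h hγ
    _ = 2 ^ γ * y ^ γ * z ^ γ := by
        rw [mul_rpow zero_le_two (by positivity), mul_rpow hy hz, mul_assoc]

theorem rpow_neg_le_two_rpow_mul_of_le_two_mul {x y z γ : ℝ} (hx : 0 < x) (hy : 0 < y)
    (hz : 0 ≤ z) (hγ : 0 ≤ γ) (h : y ≤ 2 * (x * z)) :
    x ^ (-γ) ≤ 2 ^ γ * y ^ (-γ) * z ^ γ := by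
  have hyx := rpow_le_two_rpow_mul_of_le_two_mul hy.le hx.le hz hγ h
  have hxγ : 0 < x ^ γ := rpow_pos_of_pos hx γ
  have hyγ : 0 < y ^ γ := rpow_pos_of_pos hy γ
  rw [rpow_neg hx.le, rpow_neg hy.le, inv_le_iff_one_le_mul₀' hxγ]
  calc (1 : ℝ) = y ^ γ * (y ^ γ)⁻¹ := (mul_inv_cancel₀ hyγ.ne').symm
    _ ≤ 2 ^ γ * x ^ γ * z ^ γ * (y ^ γ)⁻¹ := by gcongr
    _ = x ^ γ * (2 ^ γ * (y ^ γ)⁻¹ * z ^ γ) := by ring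

theorem couette_symbol_le (k η t : ℝ) :
    k ^ 2 + (η - k * t) ^ 2 ≤ 2 * ((1 + t ^ 2) * (1 + k ^ 2 + η ^ 2)) := by
  have hshear : (η - k * t) ^ 2 ≤ 2 * η ^ 2 + 2 * (k * t) ^ 2 := by
    nlinarith [sq_nonneg (η + k * t)]
  nlinarith [sq_nonneg t, sq_nonneg η, mul_nonneg (sq_nonneg t) (sq_nonneg η)]

theorem one_add_sq_le_couette_symbol {k : ℝ} (hk : 1 ≤ k ^ 2) (η t : ℝ) :
    1 + t ^ 2 ≤ 2 * ((k ^ 2 + (η - k * t) ^ 2) * (1 + k ^ 2 + η ^ 2)) := by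
  have ht : t ^ 2 ≤ 2 * (η - k * t) ^ 2 + 2 * η ^ 2 := by
    nlinarith [sq_nonneg (η + (η - k * t)), mul_le_mul_of_nonneg_right hk (sq_nonneg t)]
  nlinarith [sq_nonneg (η - k * t), sq_nonneg η,
    mul_nonneg (sq_nonneg (η - k * t)) (sq_nonneg η)]

theorem couette_symbol_rpow_le {β : ℝ} (hβ : 0 ≤ β) (k η t : ℝ) :
    (k ^ 2 + (η - k * t) ^ 2) ^ (2 * β) ≤
      4 ^ β * (1 + t ^ 2) ^ (2 * β) * (1 + k ^ 2 + η ^ 2) ^ (2 * β) := by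
  rw [← two_rpow_two_mul]
  exact rpow_le_two_rpow_mul_of_le_two_mul (by positivity) (by positivity) (by positivity)
    (by positivity) (couette_symbol_le k η t)

theorem couette_symbol_rpow_neg_le {β : ℝ} (hβ : 0 ≤ β) {k : ℝ} (hk : 1 ≤ k ^ 2) (η t : ℝ) :
    (k ^ 2 + (η - k * t) ^ 2) ^ (-(2 * β)) ≤
      4 ^ β * (1 + t ^ 2) ^ (-(2 * β)) * (1 + k ^ 2 + η ^ 2) ^ (2 * β) := by
  rw [← two_rpow_two_mul]
  exact rpow_neg_le_two_rpow_mul_of_le_two_mul (by nlinarith [sq_nonneg (η - k * t)])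
    (by positivity) (by positivity) (by positivity) (one_add_sq_le_couette_symbol hk η t)

theorem couette_multiplier_sobolev_bound_general (s β t : ℝ) (hβ : 0 < β)
    (f : ℤ → ℝ → ℂ) (hf0 : ∀ η, f 0 η = 0) :
    (∑' k : ℤ, ∫⁻ η : ℝ, ENNReal.ofReal
        ((1 + (k : ℝ) ^ 2 + η ^ 2) ^ s * ((k : ℝ) ^ 2 + (η - k * t) ^ 2) ^ (-(2 * β)) *
          ‖f k η‖ ^ 2)) ≤
      ENNReal.ofReal ((4 : ℝ) ^ β * (1 + t ^ 2) ^ (-(2 * β))) *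
        ∑' k : ℤ, ∫⁻ η : ℝ, ENNReal.ofReal
          ((1 + (k : ℝ) ^ 2 + η ^ 2) ^ (s + 2 * β) * ‖f k η‖ ^ 2) ∧
    ∀ g : ℤ → ℝ → ℂ, (∀ k, Measurable (g k)) →
      (∑' k : ℤ, ∫⁻ η : ℝ, ENNReal.ofReal
          ((1 + (k : ℝ) ^ 2 + η ^ 2) ^ s * ((k : ℝ) ^ 2 + (η - k * t) ^ 2) ^ (2 * β) *
            ‖g k η‖ ^ 2)) ≤
        ENNReal.ofReal ((4 : ℝ) ^ β * (1 + t ^ 2) ^ (2 * β)) *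
          ∑' k : ℤ, ∫⁻ η : ℝ, ENNReal.ofReal
            ((1 + (k : ℝ) ^ 2 + η ^ 2) ^ (s + 2 * β) * ‖g k η‖ ^ 2) := by
  have hA : ∀ (k : ℤ) (η : ℝ), 0 < 1 + (k : ℝ) ^ 2 + η ^ 2 := fun _ _ => by positivity
  refine ⟨tsum_lintegral_ofReal_le_mul (by positivity) fun k η => ?_,
    fun g _ => tsum_lintegral_ofReal_le_mul (by positivity) fun k η =>
      rpow_mul_mul_le_mul_rpow_add_mul (hA k η) (by positivity)
        (couette_symbol_rpow_le hβ.le k η t)⟩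
  rcases eq_or_ne k 0 with rfl | hk
  · simp [hf0]
  · have hk1 : (1 : ℝ) ≤ (k : ℝ) ^ 2 := by
      exact_mod_cast one_le_sq_iff_one_le_abs _ |>.mpr (Int.one_le_abs hk)
    exact rpow_mul_mul_le_mul_rpow_add_mul (hA k η) (by positivity)
      (couette_symbol_rpow_neg_le hβ.le hk1 η t)

/-- Fourier-side form of the multiplier lemma for `p^{−β}` and `p^{β}`, where
`p(t,k,η) = k² + (η − kt)²` is the symbol of the moving-frame Laplacian:
for data with vanishing `x`-average, `‖p^{−β} f‖_{H^s}² ≤ 4^β ⟨t⟩^{−4β} ‖f‖_{H^{s+2β}}²`,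
and (without the vanishing assumption) `‖p^{β} g‖_{H^s}² ≤ 4^β ⟨t⟩^{4β} ‖g‖_{H^{s+2β}}²`. -/
theorem couette_multiplier_sobolev_bound (s β t : ℝ) (hβ : 0 < β)
    (f : ℤ → ℝ → ℂ) (hf : ∀ k, Measurable (f k)) (hf0 : ∀ η, f 0 η = 0) :
    (∑' k : ℤ, ∫⁻ η : ℝ, ENNReal.ofReal
        ((1 + (k : ℝ) ^ 2 + η ^ 2) ^ s * ((k : ℝ) ^ 2 + (η - k * t) ^ 2) ^ (-(2 * β)) *
          ‖f k η‖ ^ 2)) ≤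
      ENNReal.ofReal ((4 : ℝ) ^ β * (1 + t ^ 2) ^ (-(2 * β))) *
        ∑' k : ℤ, ∫⁻ η : ℝ, ENNReal.ofReal
          ((1 + (k : ℝ) ^ 2 + η ^ 2) ^ (s + 2 * β) * ‖f k η‖ ^ 2) ∧
    ∀ g : ℤ → ℝ → ℂ, (∀ k, Measurable (g k)) →
      (∑' k : ℤ, ∫⁻ η : ℝ, ENNReal.ofReal
          ((1 + (k : ℝ) ^ 2 + η ^ 2) ^ s * ((k : ℝ) ^ 2 + (η - k * t) ^ 2) ^ (2 * β) *
            ‖g k η‖ ^ 2)) ≤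
        ENNReal.ofReal ((4 : ℝ) ^ β * (1 + t ^ 2) ^ (2 * β)) *
          ∑' k : ℤ, ∫⁻ η : ℝ, ENNReal.ofReal
            ((1 + (k : ℝ) ^ 2 + η ^ 2) ^ (s + 2 * β) * ‖g k η‖ ^ 2) :=
  couette_multiplier_sobolev_bound_general s β t hβ f hf0
end

section
/- Let ν > 0, let k be a nonzero integer, and let t, η be real numbers. Then ν^{1/3} / ((ν^{1/3}(t − η/k))² + 1) + ν (k² + (η − kt)²) ≥ ν^{1/3} / 2. -/
/-!
Write `a = ν^{1/3}`, `s = t − η/k` and `x = (a s)²`. Since `η − kt = −ks` and `k² ≥ 1`,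
the dissipation term `ν (k² + (η − kt)²) = a³ (k² + k² s²)` is at least `a³ s² = a x`, and
`1/(x + 1) + x ≥ 1` for `x ≥ 0`. So the sum is even at least `ν^{1/3}`.
-/

theorem le_div_add_one_add_mul {a x : ℝ} (ha : 0 ≤ a) (hx : 0 ≤ x) :
    a ≤ a / (x + 1) + a * x := by
  rw [div_add' _ _ _ (by positivity), le_div_iff₀ (by positivity)]
  nlinarith [mul_nonneg ha (sq_nonneg x)]

theorem le_div_sq_add_one_add_cube_mul {a k : ℝ} (ha : 0 ≤ a) (hk : 1 ≤ k ^ 2) (s : ℝ) :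
    a ≤ a / ((a * s) ^ 2 + 1) + a ^ 3 * (k ^ 2 + (k * s) ^ 2) := by
  have hs : s ^ 2 ≤ k ^ 2 + (k * s) ^ 2 := by
    nlinarith [sq_nonneg k, mul_le_mul_of_nonneg_right hk (sq_nonneg s)]
  calc a ≤ a / ((a * s) ^ 2 + 1) + a * (a * s) ^ 2 := le_div_add_one_add_mul ha (sq_nonneg _)
    _ = a / ((a * s) ^ 2 + 1) + a ^ 3 * s ^ 2 := by ring
    _ ≤ a / ((a * s) ^ 2 + 1) + a ^ 3 * (k ^ 2 + (k * s) ^ 2) := by gcongr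

theorem one_le_intCast_sq {k : ℤ} (hk : k ≠ 0) : (1 : ℝ) ≤ (k : ℝ) ^ 2 := by
  rw [one_le_sq_iff_one_le_abs, ← Int.cast_abs]
  exact_mod_cast Int.one_le_abs hk

/-- Spectral-gap property of the ghost multiplier: for `ν > 0`, nonzero integer `k`
and reals `t, η`,
`ν^{1/3}/((ν^{1/3}(t − η/k))² + 1) + ν(k² + (η − kt)²) ≥ ν^{1/3}/2`. -/
theorem ghost_multiplier_spectral_gap (ν : ℝ) (hν : 0 < ν) (k : ℤ) (hk : k ≠ 0)
    (t η : ℝ) :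
    ν ^ ((1 : ℝ) / 3) / 2 ≤
      ν ^ ((1 : ℝ) / 3) / ((ν ^ ((1 : ℝ) / 3) * (t - η / (k : ℝ))) ^ 2 + 1) +
        ν * ((k : ℝ) ^ 2 + (η - k * t) ^ 2) := by
  have hcube : (ν ^ ((1 : ℝ) / 3)) ^ 3 = ν := by
    rw [one_div]; exact_mod_cast Real.rpow_inv_natCast_pow (n := 3) hν.le three_ne_zero
  have ha : 0 ≤ ν ^ ((1 : ℝ) / 3) := by positivity
  generalize ν ^ ((1 : ℝ) / 3) = a at hcube ha ⊢
  subst hcube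
  have hη : (η - k * t) ^ 2 = ((k : ℝ) * (t - η / k)) ^ 2 := by
    field_simp [Int.cast_ne_zero.mpr hk]; ring
  rw [hη]
  calc a / 2 ≤ a := half_le_self ha
    _ ≤ _ := le_div_sq_add_one_add_cube_mul ha (one_le_intCast_sq hk) _
end
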